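/- arXiv:2105.13100 — 4 statements merged into one kernel-verified Lean document; each statement's English description precedes it below -/
import Mathlib

section
/- Let $K \subseteq \mathbb{R}^n$ be a closed convex set with nonempty interior that is strictly convex, i.e. its topological boundary $\partial K$ contains no nondegenerate line segment. Then for every $v \neq 0$ the following are equivalent: (a) $v$ is a recession direction of $K$; (b) for every boundary point $p \in \partial K$ and every outward normal $\nu \neq 0$ of $K$ at $p$ (meaning $\langle x - p, \nu\rangle \le 0$ for all $x \in K$), one has $\langle \nu, v\rangle < 0$. -/
/-!
A recession direction `v` satisfies `⟪ν, v⟫ ≤ 0` against every outward normal `ν` at `p`, since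
`p + v ∈ K`. If equality held, the whole segment `[p, p + v]` would lie in `K` and on the
supporting hyperplane, hence in `∂K`, contradicting strict convexity. Conversely, if
`p + s • v ∉ K`, let `w` be the nearest point of `K` to `z = p + s • v`: then `ν = z - w` is an
outward normal at `w ∈ ∂K`, and `0 ≥ ⟪p - w, ν⟫ = ‖ν‖² - s ⟪ν, v⟫ > 0`.
-/

open scoped RealInnerProductSpace

section SupportingHyperplane

variable {E : Type*} [NormedAddCommGroup E] [InnerProductSpace ℝ E] {K : Set E} {p ν : E}

/-- The nonzero linear functional `⟪·, ν⟫` has no local maximum, so it cannot attain its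
maximum over `K` at an interior point. -/
lemma notMem_interior_of_inner_sub_eq_zero (hν : ν ≠ 0) (hnormal : ∀ y ∈ K, ⟪y - p, ν⟫ ≤ 0)
    {x : E} (hx : ⟪x - p, ν⟫ = 0) : x ∉ interior K := by
  intro hxint
  have hmax : IsLocalMax (fun y => ⟪ν, y⟫) x := by
    filter_upwards [mem_interior_iff_mem_nhds.1 hxint] with y hy
    have hy' := hnormal y hy
    rw [inner_sub_left, real_inner_comm ν] at hx hy'
    linarith
  have hzero := hmax.hasFDerivAt_eq_zero (innerSL ℝ ν).hasFDerivAt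
  exact hν (by simpa using congrArg (· ν) hzero)

lemma IsClosed.mem_frontier_of_inner_sub_eq_zero (hclosed : IsClosed K) (hν : ν ≠ 0)
    (hnormal : ∀ y ∈ K, ⟪y - p, ν⟫ ≤ 0) {x : E} (hxK : x ∈ K) (hx : ⟪x - p, ν⟫ = 0) :
    x ∈ frontier K :=
  hclosed.frontier_eq ▸ ⟨hxK, notMem_interior_of_inner_sub_eq_zero hν hnormal hx⟩

lemma IsClosed.exists_mem_frontier_inner_sub_le_zero [CompleteSpace E] (hclosed : IsClosed K)
    (hconv : Convex ℝ K) (hne : K.Nonempty) {z : E} (hz : z ∉ K) :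
    ∃ w ∈ frontier K, z - w ≠ 0 ∧ ∀ x ∈ K, ⟪x - w, z - w⟫ ≤ 0 := by
  obtain ⟨w, hwK, hmin⟩ := exists_norm_eq_iInf_of_complete_convex hne hclosed.isComplete hconv z
  have hν : z - w ≠ 0 := sub_ne_zero.2 fun h => hz (h ▸ hwK)
  have hnormal : ∀ x ∈ K, ⟪x - w, z - w⟫ ≤ 0 := fun x hx => by
    rw [real_inner_comm]
    exact (norm_eq_iInf_iff_real_inner_le_zero hconv hwK).1 hmin x hx
  exact ⟨w, hclosed.mem_frontier_of_inner_sub_eq_zero hν hnormal hwK (by simp), hν, hnormal⟩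

end SupportingHyperplane

theorem recession_iff_normals_negative_general (n : ℕ) (K : Set (EuclideanSpace ℝ (Fin n)))
    (hclosed : IsClosed K) (hconv : Convex ℝ K)
    (hstrict : ∀ x ∈ frontier K, ∀ y ∈ frontier K, segment ℝ x y ⊆ frontier K → x = y)
    (v : EuclideanSpace ℝ (Fin n)) (hv : v ≠ 0) :
    (∀ p ∈ K, ∀ s : ℝ, 0 ≤ s → p + s • v ∈ K) ↔
      (∀ p ∈ frontier K, ∀ ν : EuclideanSpace ℝ (Fin n), ν ≠ 0 →
        (∀ x ∈ K, ⟪x - p, ν⟫ ≤ 0) → ⟪ν, v⟫ < 0) := by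
  constructor
  · intro hrec p hp ν hν hnormal
    have hpK : p ∈ K := hclosed.frontier_subset hp
    have hle : ⟪ν, v⟫ ≤ 0 := by
      simpa [real_inner_comm] using hnormal _ (hrec p hpK 1 zero_le_one)
    refine hle.lt_of_ne fun heq => hv ?_
    have hseg : segment ℝ p (p + v) ⊆ frontier K := by
      rw [segment_eq_image']
      rintro _ ⟨t, ht, rfl⟩
      refine hclosed.mem_frontier_of_inner_sub_eq_zero hν hnormal ?_ ?_
      · simpa using hrec p hpK t ht.1
      · rw [add_sub_cancel_left, add_sub_cancel_left, real_inner_smul_left, real_inner_comm, heq, mul_zero]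
    simpa using (hstrict p hp (p + v) (hseg (right_mem_segment ℝ p (p + v))) hseg).symm
  · intro hneg p hp s hs
    by_contra hz
    obtain ⟨w, hw, hν, hnormal⟩ :=
      hclosed.exists_mem_frontier_inner_sub_le_zero hconv ⟨p, hp⟩ hz
    have hlt := hneg w hw _ hν hnormal
    have hpw : p - w = (p + s • v - w) - s • v := by abel
    have hple := hnormal p hp
    rw [hpw, inner_sub_left, real_inner_self_eq_norm_sq, real_inner_smul_left,
      real_inner_comm] at hple
    have hνpos : 0 < ‖p + s • v - w‖ := norm_pos_iff.2 hν
    nlinarith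

/-- For a closed, strictly convex set `K ⊆ ℝⁿ` with nonempty interior
(strict convexity meaning that the boundary contains no nondegenerate
segment), a nonzero vector `v` is a recession direction of `K` if and only if
`⟨ν, v⟩ < 0` for every outward normal `ν` at every boundary point of `K`. -/
theorem recession_iff_normals_negative (n : ℕ) (K : Set (EuclideanSpace ℝ (Fin n)))
    (hclosed : IsClosed K) (hconv : Convex ℝ K)
    (hint : (interior K).Nonempty)
    (hstrict : ∀ x ∈ frontier K, ∀ y ∈ frontier K, segment ℝ x y ⊆ frontier K → x = y)
    (v : EuclideanSpace ℝ (Fin n)) (hv : v ≠ 0) :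
    (∀ p ∈ K, ∀ s : ℝ, 0 ≤ s → p + s • v ∈ K) ↔
      (∀ p ∈ frontier K, ∀ ν : EuclideanSpace ℝ (Fin n), ν ≠ 0 →
        (∀ x ∈ K, ⟪x - p, ν⟫ ≤ 0) → ⟪ν, v⟫ < 0) :=
  recession_iff_normals_negative_general n K hclosed hconv hstrict v hv
end

section
/- Let $K \subseteq \mathbb{R}^n$ be a convex set, let $p \in K$, and let $v \in \mathbb{R}^n$ be such that $p + s v \in K$ for every $s \ge 0$. Then the function $s \mapsto \operatorname{dist}(p + s v, \mathbb{R}^n\setminus K)$ is concave and nondecreasing on $[0, \infty)$. -/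
/-!
Write `r` and `s` for the distances from `x` and `y` to `Kᶜ` and `t = a r + b s`. Every point
`a x + b y + u` with `‖u‖ < t` splits as `a (x + (r/t) u) + b (y + (s/t) u)`, a convex combination
of points of the balls of radii `r` and `s` about `x` and `y`; so it lies in `K`, and the distance
to the complement is concave on `K`. Restricting to the ray gives a concave function on `[0, ∞)`,
and a concave function bounded below on a half-line cannot ever decrease: once a secant has
negative slope, concavity forces the function below any bound further out.
-/

open Metric Set

section ConcaveMonotone

variable {𝕜 : Type*} [Field 𝕜] [LinearOrder 𝕜] [IsStrictOrderedRing 𝕜] {f : 𝕜 → 𝕜} {c : 𝕜}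

theorem ConcaveOn.monotoneOn_Ici_of_bddBelow (hf : ConcaveOn 𝕜 (Ici c) f)
    (hbdd : BddBelow (f '' Ici c)) : MonotoneOn f (Ici c) := by
  obtain ⟨m, hm⟩ := hbdd
  intro x hx y hy hxy_le
  by_contra! hfyx
  have hxy : x < y := hxy_le.lt_of_ne (by rintro rfl; exact hfyx.false)
  set σ := (f y - f x) / (y - x)
  have hσ_neg : σ < 0 := div_neg_of_neg_of_pos (sub_neg.2 hfyx) (sub_pos.2 hxy)
  have hmy : m ≤ f y := hm (mem_image_of_mem f hy)
  -- far enough out, the secant through `y` of slope `σ` is below `m`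
  set z := y + (f y - m) / -σ + 1
  have hzy : 0 < z - y := by
    have : 0 ≤ (f y - m) / -σ := div_nonneg (sub_nonneg.2 hmy) (neg_nonneg.2 hσ_neg.le)
    simp only [z]
    linarith
  have hz : z ∈ Ici c := mem_Ici.2 (by linarith [mem_Ici.1 hy])
  have hslope : (f z - f y) / (z - y) ≤ σ := hf.slope_anti_adjacent hx hz hxy (sub_pos.1 hzy)
  have hfz : f z ≤ m + σ := by
    have hσz : σ * (z - y) = m - f y + σ := by
      simp only [z]
      field_simp [hσ_neg.ne]
      ring
    linarith [(div_le_iff₀ hzy).1 hslope]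
  linarith [hm (mem_image_of_mem f hz)]

end ConcaveMonotone

section InfDistCompl

variable {E : Type*} [NormedAddCommGroup E] [NormedSpace ℝ E] {K : Set E}

theorem add_smul_mem_of_norm_lt {x u : E} (hx : x ∈ K) {t : ℝ} (hu : ‖u‖ < t) :
    x + (infDist x Kᶜ / t) • u ∈ K := by
  have ht : 0 < t := (norm_nonneg u).trans_lt hu
  rcases (infDist_nonneg (x := x) (s := Kᶜ)).eq_or_lt with hr | hr
  · simpa [← hr] using hx
  apply ball_infDist_compl_subset
  rw [mem_ball, dist_self_add_left, norm_smul, Real.norm_of_nonneg (by positivity),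
    div_mul_eq_mul_div, div_lt_iff₀ ht]
  exact mul_lt_mul_of_pos_left hu hr

theorem Convex.concaveOn_infDist_compl (hK : Convex ℝ K) : ConcaveOn ℝ K (infDist · Kᶜ) := by
  refine ⟨hK, fun x hx y hy a b ha hb hab => ?_⟩
  simp only [smul_eq_mul]
  rcases Kᶜ.eq_empty_or_nonempty with hKc | hKc
  · simp [hKc]
  refine (le_infDist hKc).2 fun w hw => le_of_not_gt fun hlt => hw ?_
  set t := a * infDist x Kᶜ + b * infDist y Kᶜ
  set u := w - (a • x + b • y)
  have hu : ‖u‖ < t := by rwa [← dist_eq_norm']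
  have ht : t ≠ 0 := ((norm_nonneg u).trans_lt hu).ne'
  have hsplit : a • (x + (infDist x Kᶜ / t) • u) + b • (y + (infDist y Kᶜ / t) • u) = w := by
    have hcoef : a * (infDist x Kᶜ / t) + b * (infDist y Kᶜ / t) = 1 := by
      rw [mul_div_assoc', mul_div_assoc', ← add_div, div_self ht]
    calc _ = a • x + b • y + (a * (infDist x Kᶜ / t) + b * (infDist y Kᶜ / t)) • u := by
            simp only [smul_add, smul_smul, add_smul]; abel
      _ = w := by rw [hcoef, one_smul, add_sub_cancel]
  rw [← hsplit]
  exact hK (add_smul_mem_of_norm_lt hx hu) (add_smul_mem_of_norm_lt hy hu) ha hb hab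

end InfDistCompl

theorem dist_along_ray_concave_monotone_general (n : ℕ) (K : Set (EuclideanSpace ℝ (Fin n)))
    (hconv : Convex ℝ K) (p : EuclideanSpace ℝ (Fin n))
    (v : EuclideanSpace ℝ (Fin n)) (hray : ∀ s : ℝ, 0 ≤ s → p + s • v ∈ K) :
    ConcaveOn ℝ (Set.Ici 0) (fun s : ℝ => Metric.infDist (p + s • v) Kᶜ) ∧
    MonotoneOn (fun s : ℝ => Metric.infDist (p + s • v) Kᶜ) (Set.Ici 0) := by
  have hline : (fun s : ℝ => infDist (p + s • v) Kᶜ) =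
      (infDist · Kᶜ) ∘ AffineMap.lineMap p (v +ᵥ p) := by
    funext s
    rw [Function.comp_apply, AffineMap.lineMap_vadd_apply, vadd_eq_add, add_comm]
  have hconc : ConcaveOn ℝ (Ici 0) (fun s : ℝ => infDist (p + s • v) Kᶜ) := by
    rw [hline]
    refine (hconv.concaveOn_infDist_compl.comp_affineMap _).subset (fun s hs => ?_) (convex_Ici 0)
    rw [mem_preimage, AffineMap.lineMap_vadd_apply, vadd_eq_add, add_comm]
    exact hray s hs
  refine ⟨hconc, hconc.monotoneOn_Ici_of_bddBelow ⟨0, ?_⟩⟩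
  rintro _ ⟨s, -, rfl⟩
  exact infDist_nonneg

/-- If `K ⊆ ℝⁿ` is convex, `p ∈ K` and `p + s v ∈ K` for all `s ≥ 0`, then
`s ↦ dist(p + s v, Kᶜ)` is concave and nondecreasing on `[0, ∞)`. -/
theorem dist_along_ray_concave_monotone (n : ℕ) (K : Set (EuclideanSpace ℝ (Fin n)))
    (hconv : Convex ℝ K) (p : EuclideanSpace ℝ (Fin n)) (hp : p ∈ K)
    (v : EuclideanSpace ℝ (Fin n)) (hray : ∀ s : ℝ, 0 ≤ s → p + s • v ∈ K) :
    ConcaveOn ℝ (Set.Ici 0) (fun s : ℝ => Metric.infDist (p + s • v) Kᶜ) ∧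
    MonotoneOn (fun s : ℝ => Metric.infDist (p + s • v) Kᶜ) (Set.Ici 0) :=
  dist_along_ray_concave_monotone_general n K hconv p v hray
end

section
/- Let $f : \mathbb{R}^2 \to \mathbb{R}$ be continuous on $[-3,3] \times [-1,1]$ and suppose that for each fixed $x_2 \in [-1,1]$ the function $x_1 \mapsto f(x_1, x_2)$ is concave on $[-3,3]$. Then $\int_{-3}^{3}\int_{-1}^{1} f(x_1,x_2)\, dx_2\, dx_1 \le 3 \int_{-1}^{1}\int_{-1}^{1} f(x_1,x_2)\, dx_2\, dx_1$. -/
open MeasureTheory intervalIntegral Set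

/-!
The inner integral `F x₁ = ∫ x₂ in -1..1, f x₁ x₂` is concave on `[-3, 3]`, being an integral of
concave functions, so `F (x - 2) + F (x + 2) ≤ 2 * F x` for `x ∈ [-1, 1]`. Translating the outer
thirds `[-3, -1]` and `[1, 3]` of the range of integration onto `[-1, 1]` and integrating this
midpoint inequality bounds their contribution by `2 * ∫ x in -1..1, F x`.
-/

theorem ConcaveOn.add_le_two_mul {E : Type*} [AddCommGroup E] [Module ℝ E] {s : Set E}
    {F : E → ℝ} (hF : ConcaveOn ℝ s F) {x d : E} (hl : x - d ∈ s) (hr : x + d ∈ s) :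
    F (x - d) + F (x + d) ≤ 2 * F x := by
  have h := hF.2 hl hr (by norm_num : (0 : ℝ) ≤ 1 / 2) (by norm_num : (0 : ℝ) ≤ 1 / 2)
    (by norm_num)
  rw [show (1 / 2 : ℝ) • (x - d) + (1 / 2 : ℝ) • (x + d) = x by module,
    smul_eq_mul, smul_eq_mul] at h
  linarith

theorem concaveOn_integral {E α : Type*} [AddCommGroup E] [Module ℝ E] [MeasurableSpace α]
    {μ : Measure α} {s : Set E} {f : E → α → ℝ} (hs : Convex ℝ s)
    (hf : ∀ᵐ y ∂μ, ConcaveOn ℝ s (f · y)) (hint : ∀ x ∈ s, Integrable (f x) μ) :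
    ConcaveOn ℝ s (fun x ↦ ∫ y, f x y ∂μ) := by
  refine ⟨hs, fun x hx x' hx' a b ha hb hab ↦ ?_⟩
  have hax := (hint x hx).const_mul a
  have hbx' := (hint x' hx').const_mul b
  simp only [smul_eq_mul]
  rw [← MeasureTheory.integral_const_mul, ← MeasureTheory.integral_const_mul,
    ← integral_add hax hbx']
  refine integral_mono_ae (hax.add hbx') (hint _ (hs hx hx' ha hb hab)) ?_
  filter_upwards [hf] with y hy
  simpa only [smul_eq_mul] using hy.2 hx hx' ha hb hab

theorem concaveOn_intervalIntegral {E : Type*} [AddCommGroup E] [Module ℝ E] {s : Set E}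
    {f : E → ℝ → ℝ} {c d : ℝ} (hcd : c ≤ d) (hs : Convex ℝ s)
    (hf : ∀ y ∈ Ioc c d, ConcaveOn ℝ s (f · y))
    (hint : ∀ x ∈ s, IntervalIntegrable (f x) volume c d) :
    ConcaveOn ℝ s (fun x ↦ ∫ y in c..d, f x y) := by
  simp only [integral_of_le hcd]
  exact concaveOn_integral hs ((ae_restrict_iff' measurableSet_Ioc).2 (.of_forall hf))
    fun x hx ↦ (hint x hx).1

theorem continuousOn_parametric_intervalIntegral_of_continuousOn {X E : Type*}
    [TopologicalSpace X] [NormedAddCommGroup E] [NormedSpace ℝ E] {f : X → ℝ → E} {s : Set X}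
    {c d : ℝ} (hcd : c ≤ d) (hf : ContinuousOn (Function.uncurry f) (s ×ˢ Icc c d)) :
    ContinuousOn (fun x ↦ ∫ t in c..d, f x t) s := by
  rw [continuousOn_iff_continuous_domRestrict]
  let g : s → ℝ → E := fun x t ↦ f x (projIcc c d hcd t)
  have hg : Continuous (Function.uncurry g) :=
    hf.comp_continuous (f := fun p : s × ℝ ↦ ((p.1 : X), (projIcc c d hcd p.2 : ℝ)))
      (by fun_prop) fun p ↦ ⟨p.1.2, Subtype.mem _⟩
  refine (continuous_parametric_intervalIntegral_of_continuous' hg c d).congr fun x ↦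
    integral_congr fun t ht ↦ ?_
  rw [uIcc_of_le hcd] at ht
  simp [g, projIcc_of_mem hcd ht]

theorem ConcaveOn.intervalIntegral_le_three_mul {F : ℝ → ℝ} {p a b q : ℝ} (hab : a ≤ b)
    (hpa : a - p = b - a) (hbq : q - b = b - a) (hF : ConcaveOn ℝ (Icc p q) F)
    (hFi : IntervalIntegrable F volume p q) :
    ∫ x in p..q, F x ≤ 3 * ∫ x in a..b, F x := by
  have hint : ∀ u v, p ≤ u → u ≤ v → v ≤ q → IntervalIntegrable F volume u v :=
    fun u v h₁ h₂ h₃ ↦ hFi.mono_set <| by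
      rw [uIcc_of_le h₂, uIcc_of_le (by linarith)]; exact Icc_subset_Icc h₁ h₃
  have hpa' : p ≤ a := by linarith
  have hbq' : b ≤ q := by linarith
  have hleft_int : IntervalIntegrable (fun x ↦ F (x - (b - a))) volume a b := by
    convert (hint p a le_rfl hpa' (hab.trans hbq')).comp_sub_right (b - a) using 1 <;> linarith
  have hright_int : IntervalIntegrable (fun x ↦ F (x + (b - a))) volume a b := by
    convert (hint b q (hpa'.trans hab) hbq' le_rfl).comp_add_right (b - a) using 1 <;> linarith
  have hsplit :
      ∫ x in p..q, F x = (∫ x in p..a, F x) + (∫ x in a..b, F x) + ∫ x in b..q, F x := by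
    rw [integral_add_adjacent_intervals (hint p a le_rfl hpa' (hab.trans hbq'))
        (hint a b hpa' hab hbq'),
      integral_add_adjacent_intervals (hint p b le_rfl (hpa'.trans hab) hbq')
        (hint b q (hpa'.trans hab) hbq' le_rfl)]
  have hleft : ∫ x in p..a, F x = ∫ x in a..b, F (x - (b - a)) := by
    rw [integral_comp_sub_right]; congr 1 <;> linarith
  have hright : ∫ x in b..q, F x = ∫ x in a..b, F (x + (b - a)) := by
    rw [integral_comp_add_right]; congr 1 <;> linarith
  have hmid : ∫ x in a..b, (F (x - (b - a)) + F (x + (b - a))) ≤ ∫ x in a..b, 2 * F x :=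
    integral_mono_on hab (hleft_int.add hright_int) ((hint a b hpa' hab hbq').const_mul 2)
      fun x hx ↦ hF.add_le_two_mul ⟨by linarith [hx.1], by linarith [hx.2]⟩
        ⟨by linarith [hx.1], by linarith [hx.2]⟩
  rw [integral_add hleft_int hright_int, intervalIntegral.integral_const_mul] at hmid
  rw [hsplit, hleft, hright]
  linarith

/-- Brunn-type integral comparison: if `f` is continuous on `[-3,3] × [-1,1]`
and concave in the first variable, then
`∫_{-3}^{3}∫_{-1}^{1} f ≤ 3 ∫_{-1}^{1}∫_{-1}^{1} f`. -/
theorem concave_integral_comparison (f : ℝ → ℝ → ℝ)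
    (hcont : ContinuousOn (fun p : ℝ × ℝ => f p.1 p.2)
      (Set.Icc (-3 : ℝ) 3 ×ˢ Set.Icc (-1 : ℝ) 1))
    (hconc : ∀ x2 ∈ Set.Icc (-1 : ℝ) 1,
      ConcaveOn ℝ (Set.Icc (-3 : ℝ) 3) (fun x1 => f x1 x2)) :
    (∫ x1 in (-3 : ℝ)..3, ∫ x2 in (-1 : ℝ)..1, f x1 x2) ≤
      3 * ∫ x1 in (-1 : ℝ)..1, ∫ x2 in (-1 : ℝ)..1, f x1 x2 := by
  have hslice : ∀ x1 ∈ Icc (-3 : ℝ) 3, IntervalIntegrable (f x1) volume (-1) 1 := fun x1 hx1 ↦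
    (hcont.comp (Continuous.prodMk_right x1).continuousOn fun _ hx2 ↦ ⟨hx1, hx2⟩
      ).intervalIntegrable_of_Icc (by norm_num)
  have hF_conc : ConcaveOn ℝ (Icc (-3 : ℝ) 3) fun x1 ↦ ∫ x2 in (-1 : ℝ)..1, f x1 x2 :=
    concaveOn_intervalIntegral (by norm_num) (convex_Icc _ _)
      (fun x2 hx2 ↦ hconc x2 (Ioc_subset_Icc_self hx2)) hslice
  have hF_int : IntervalIntegrable (fun x1 ↦ ∫ x2 in (-1 : ℝ)..1, f x1 x2) volume (-3) 3 :=
    (continuousOn_parametric_intervalIntegral_of_continuousOn (by norm_num) hcont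
      ).intervalIntegrable_of_Icc (by norm_num)
  exact hF_conc.intervalIntegral_le_three_mul (by norm_num) (by norm_num) (by norm_num) hF_int
end

section
/- There exists a constant $c > 0$ with the following property. Let $A$ be a real antisymmetric $4\times 4$ matrix with $A_{12} = 0$ and $A_{34} = 0$. Let $\gamma(x_1,x_2,\theta) = (x_1, x_2, \sqrt{2}\cos\theta, \sqrt{2}\sin\theta) \in \mathbb{R}^4$ and $\nu(\theta) = (0,0,\cos\theta,\sin\theta)$. Then $\int_{\mathbb{R}^2\times(0,2\pi)} \langle A\,\gamma(x_1,x_2,\theta),\, \nu(\theta) \rangle^2 \, e^{-(x_1^2+x_2^2)/4}\, dx_1\, dx_2\, d\theta \;\ge\; c\,\|A\|^2$, where $\|A\|$ is the Frobenius norm. In particular, the only antisymmetric $4\times4$ matrix $A$ with $A_{12}=A_{34}=0$ for which $\langle A\,\gamma(x_1,x_2,\theta), \nu(\theta)\rangle$ vanishes identically is $A = 0$. -/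
open Matrix

/-- Parametrization of the bubble-sheet cylinder `Γ = ℝ² × S¹(√2) ⊆ ℝ⁴`. -/
noncomputable def bubbleSheet (x1 x2 θ : ℝ) : Fin 4 → ℝ :=
  ![x1, x2, Real.sqrt 2 * Real.cos θ, Real.sqrt 2 * Real.sin θ]

/-- The outward unit normal of the bubble-sheet cylinder. -/
noncomputable def bubbleSheetNormal (θ : ℝ) : Fin 4 → ℝ :=
  ![0, 0, Real.cos θ, Real.sin θ]

/-!
The form can be computed exactly. For antisymmetric `A` the rotation of the circle factor is
tangent to `Γ`, so `⟨Aγ, ν⟩ = (A₃₁x₁ + A₃₂x₂) cos θ + (A₄₁x₁ + A₄₂x₂) sin θ`. Integrating out `θ`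
and then the two Gaussian variables gives `8π² (A₃₁² + A₃₂² + A₄₁² + A₄₂²)`, which is
`4π² ‖A‖²` once `A₁₂ = A₃₄ = 0`. (In the code indices start at `0`, so `A₃₁` is `A 2 0`.)
-/

open Real MeasureTheory

lemma integral_mul_exp_neg_mul_sq (b : ℝ) : ∫ x : ℝ, x * exp (-b * x ^ 2) = 0 := by
  have h := integral_neg_eq_self (fun x : ℝ => x * exp (-b * x ^ 2)) volume
  simp only [neg_mul, neg_sq, integral_neg] at h ⊢
  linarith

section GaussianMoments

variable {b : ℝ}

lemma integrable_sq_mul_exp_neg_mul_sq (hb : 0 < b) :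
    Integrable fun x : ℝ => x ^ 2 * exp (-b * x ^ 2) := by
  simpa [rpow_two] using integrable_rpow_mul_exp_neg_mul_sq hb (s := 2) (by norm_num)

lemma integral_sq_mul_exp_neg_mul_sq (hb : 0 < b) :
    ∫ x : ℝ, x ^ 2 * exp (-b * x ^ 2) = √(π / b) / (2 * b) := by
  have hv : ∀ x : ℝ, HasDerivAt (fun y => -(2 * b)⁻¹ * exp (-b * y ^ 2))
      (x * exp (-b * x ^ 2)) x := fun x =>
    (((hasDerivAt_pow 2 x).const_mul (-b)).exp.const_mul (-(2 * b)⁻¹)).congr_deriv (by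
      field_simp; ring)
  have huv' : Integrable ((fun x : ℝ => x) * fun x => x * exp (-b * x ^ 2)) := by
    convert integrable_sq_mul_exp_neg_mul_sq hb using 2 with x
    simp only [Pi.mul_apply]; ring
  have hu'v : Integrable ((fun _ : ℝ => (1 : ℝ)) * fun x => -(2 * b)⁻¹ * exp (-b * x ^ 2)) := by
    simpa [Pi.mul_def] using (integrable_exp_neg_mul_sq hb).const_mul (-(2 * b)⁻¹)
  have huv : Integrable ((fun x : ℝ => x) * fun x => -(2 * b)⁻¹ * exp (-b * x ^ 2)) := by
    convert (integrable_mul_exp_neg_mul_sq hb).const_mul (-(2 * b)⁻¹) using 2 with x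
    simp only [Pi.mul_apply]; ring
  calc ∫ x : ℝ, x ^ 2 * exp (-b * x ^ 2)
      = ∫ x : ℝ, x * (x * exp (-b * x ^ 2)) := by simp_rw [← mul_assoc, sq]
    _ = -∫ x : ℝ, 1 * (-(2 * b)⁻¹ * exp (-b * x ^ 2)) :=
        integral_mul_deriv_eq_deriv_mul_of_integrable (fun x _ => hasDerivAt_id x)
          (fun x _ => hv x) huv' hu'v huv
    _ = √(π / b) / (2 * b) := by
        simp only [one_mul, integral_const_mul, integral_gaussian]
        ring

lemma integral_quadratic_mul_exp_neg_mul_sq (hb : 0 < b) (a₂ a₁ a₀ : ℝ) :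
    ∫ x : ℝ, (a₂ * x ^ 2 + a₁ * x + a₀) * exp (-b * x ^ 2) = (a₂ / (2 * b) + a₀) * √(π / b) := by
  have h2 := (integrable_sq_mul_exp_neg_mul_sq hb).const_mul a₂
  have h1 := (integrable_mul_exp_neg_mul_sq hb).const_mul a₁
  have h0 := (integrable_exp_neg_mul_sq hb).const_mul a₀
  have h21 : Integrable fun x : ℝ =>
      a₂ * (x ^ 2 * exp (-b * x ^ 2)) + a₁ * (x * exp (-b * x ^ 2)) := h2.add h1
  simp_rw [add_mul, mul_assoc]
  rw [integral_add h21 h0, integral_add h2 h1, integral_const_mul, integral_const_mul,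
    integral_const_mul, integral_sq_mul_exp_neg_mul_sq hb, integral_mul_exp_neg_mul_sq,
    integral_gaussian]
  ring

lemma integral_integral_quadratic_form_mul_exp_neg_mul (hb : 0 < b) (a c d : ℝ) :
    ∫ x : ℝ, ∫ y : ℝ, (a * x ^ 2 + c * x * y + d * y ^ 2) * exp (-b * (x ^ 2 + y ^ 2))
      = (a + d) * π / (2 * b ^ 2) := by
  have inner : ∀ x : ℝ, ∫ y : ℝ, (a * x ^ 2 + c * x * y + d * y ^ 2) * exp (-b * (x ^ 2 + y ^ 2))
      = √(π / b) * ((a * x ^ 2 + 0 * x + d / (2 * b)) * exp (-b * x ^ 2)) := fun x => by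
    have h : ∀ y : ℝ, (a * x ^ 2 + c * x * y + d * y ^ 2) * exp (-b * (x ^ 2 + y ^ 2))
        = exp (-b * x ^ 2) * ((d * y ^ 2 + c * x * y + a * x ^ 2) * exp (-b * y ^ 2)) := by
      intro y; rw [mul_add, exp_add]; ring
    simp_rw [h]
    rw [integral_const_mul, integral_quadratic_mul_exp_neg_mul_sq hb]
    ring
  simp_rw [inner]
  rw [integral_const_mul, integral_quadratic_mul_exp_neg_mul_sq hb]
  linear_combination (a + d) / (2 * b) * mul_self_sqrt (div_pos pi_pos hb).le

end GaussianMoments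

lemma integral_mul_cos_add_mul_sin_sq (α β : ℝ) :
    ∫ θ in (0 : ℝ)..(2 * π), (α * cos θ + β * sin θ) ^ 2 = π * (α ^ 2 + β ^ 2) := by
  have h : ∀ θ : ℝ, (α * cos θ + β * sin θ) ^ 2
      = α ^ 2 * cos θ ^ 2 + ((2 * α * β) * (sin θ * cos θ) + β ^ 2 * sin θ ^ 2) :=
    fun θ => by ring
  simp_rw [h]
  rw [intervalIntegral.integral_add, intervalIntegral.integral_add,
    intervalIntegral.integral_const_mul, intervalIntegral.integral_const_mul,
    intervalIntegral.integral_const_mul, integral_cos_sq, integral_sin_mul_cos₁,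
    integral_sin_sq]
  · simp only [sin_two_pi, sin_zero, cos_two_pi, mul_zero]; ring
  all_goals exact (Continuous.intervalIntegrable (by fun_prop) _ _)

lemma Matrix.apply_eq_neg_of_transpose_eq_neg {n R : Type*} [Neg R] {A : Matrix n n R}
    (hA : Aᵀ = -A) (i j : n) : A j i = -A i j :=
  congrFun (congrFun hA i) j

lemma Matrix.apply_self_eq_zero_of_transpose_eq_neg {n : Type*} {A : Matrix n n ℝ}
    (hA : Aᵀ = -A) (i : n) : A i i = 0 := by
  linarith [apply_eq_neg_of_transpose_eq_neg hA i i]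

section Antisymmetric

variable {A : Matrix (Fin 4) (Fin 4) ℝ}

lemma sum_sq_entries_of_transpose_eq_neg (hA : Aᵀ = -A) :
    ∑ i, ∑ j, A i j ^ 2
      = 2 * (A 1 0 ^ 2 + A 2 0 ^ 2 + A 2 1 ^ 2 + A 3 0 ^ 2 + A 3 1 ^ 2 + A 3 2 ^ 2) := by
  have h := apply_eq_neg_of_transpose_eq_neg hA
  simp only [Fin.sum_univ_four, apply_self_eq_zero_of_transpose_eq_neg hA,
    h 1 0, h 2 0, h 2 1, h 3 0, h 3 1, h 3 2]
  ring

lemma mulVec_bubbleSheet_dotProduct_normal (hA : Aᵀ = -A) (x1 x2 θ : ℝ) :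
    A *ᵥ bubbleSheet x1 x2 θ ⬝ᵥ bubbleSheetNormal θ
      = (A 2 0 * x1 + A 2 1 * x2) * cos θ + (A 3 0 * x1 + A 3 1 * x2) * sin θ := by
  simp only [bubbleSheet, bubbleSheetNormal, mulVec, dotProduct, Fin.sum_univ_four,
    apply_self_eq_zero_of_transpose_eq_neg hA, apply_eq_neg_of_transpose_eq_neg hA 2 3,
    cons_val_zero, cons_val_one, cons_val_two, cons_val_three, head_cons, tail_cons]
  ring

lemma integral_sq_mulVec_bubbleSheet_dotProduct_normal (hA : Aᵀ = -A) :
    ∫ x1 : ℝ, ∫ x2 : ℝ, ∫ θ in (0 : ℝ)..(2 * π),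
        (A *ᵥ bubbleSheet x1 x2 θ ⬝ᵥ bubbleSheetNormal θ) ^ 2 * exp (-(x1 ^ 2 + x2 ^ 2) / 4)
      = 8 * π ^ 2 * (A 2 0 ^ 2 + A 2 1 ^ 2 + A 3 0 ^ 2 + A 3 1 ^ 2) := by
  have hθ : ∀ x1 x2 : ℝ, ∫ θ in (0 : ℝ)..(2 * π),
        (A *ᵥ bubbleSheet x1 x2 θ ⬝ᵥ bubbleSheetNormal θ) ^ 2 * exp (-(x1 ^ 2 + x2 ^ 2) / 4)
      = (π * (A 2 0 ^ 2 + A 3 0 ^ 2) * x1 ^ 2 + 2 * π * (A 2 0 * A 2 1 + A 3 0 * A 3 1) * x1 * x2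
          + π * (A 2 1 ^ 2 + A 3 1 ^ 2) * x2 ^ 2) * exp (-(1 / 4) * (x1 ^ 2 + x2 ^ 2)) := by
    intro x1 x2
    simp_rw [mulVec_bubbleSheet_dotProduct_normal hA, intervalIntegral.integral_mul_const,
      integral_mul_cos_add_mul_sin_sq]
    rw [show -(x1 ^ 2 + x2 ^ 2) / 4 = -(1 / 4) * (x1 ^ 2 + x2 ^ 2) by ring]
    ring
  simp only [hθ, integral_integral_quadratic_form_mul_exp_neg_mul (by norm_num : (0 : ℝ) < 1 / 4)]
  ring

end Antisymmetric

lemma Matrix.eq_zero_of_sum_sq_entries_eq_zero {m n : Type*} [Fintype m] [Fintype n]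
    {A : Matrix m n ℝ} (h : ∑ i, ∑ j, A i j ^ 2 = 0) : A = 0 := by
  ext i j
  have hi := (Finset.sum_eq_zero_iff_of_nonneg fun i _ =>
    Finset.sum_nonneg fun j _ => sq_nonneg (A i j)).1 h i (Finset.mem_univ i)
  have hij := (Finset.sum_eq_zero_iff_of_nonneg fun j _ => sq_nonneg (A i j)).1 hi j
    (Finset.mem_univ j)
  exact pow_eq_zero_iff two_ne_zero |>.1 hij

/-- The Gaussian bilinear form `A ↦ ∫_Γ ⟨Ax, ν⟩² e^{-|x|²/4}` is uniformly
positive definite on the space of antisymmetric `4×4` matrices with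
`A₁₂ = A₃₄ = 0`.  In particular the only such matrix for which `⟨Ax, ν⟩`
vanishes identically on the cylinder is `A = 0`. -/
theorem rotation_form_positive_definite :
    ∃ c > (0:ℝ), ∀ A : Matrix (Fin 4) (Fin 4) ℝ,
      Aᵀ = -A → A 0 1 = 0 → A 2 3 = 0 →
      (c * (∑ i : Fin 4, ∑ j : Fin 4, (A i j) ^ 2) ≤
        ∫ x1 : ℝ, ∫ x2 : ℝ, ∫ θ in (0:ℝ)..(2 * Real.pi),
          (A.mulVec (bubbleSheet x1 x2 θ) ⬝ᵥ bubbleSheetNormal θ) ^ 2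
            * Real.exp (-(x1 ^ 2 + x2 ^ 2) / 4)) ∧
      ((∀ x1 x2 θ : ℝ, A.mulVec (bubbleSheet x1 x2 θ) ⬝ᵥ bubbleSheetNormal θ = 0) →
        A = 0) := by
  refine ⟨4 * π ^ 2, by positivity, fun A hA h01 h23 => ?_⟩
  have h10 : A 1 0 = 0 := by rw [apply_eq_neg_of_transpose_eq_neg hA, h01, neg_zero]
  have h32 : A 3 2 = 0 := by rw [apply_eq_neg_of_transpose_eq_neg hA, h23, neg_zero]
  have hform : ∫ x1 : ℝ, ∫ x2 : ℝ, ∫ θ in (0 : ℝ)..(2 * π),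
        (A *ᵥ bubbleSheet x1 x2 θ ⬝ᵥ bubbleSheetNormal θ) ^ 2 * exp (-(x1 ^ 2 + x2 ^ 2) / 4)
      = 4 * π ^ 2 * ∑ i, ∑ j, A i j ^ 2 := by
    rw [integral_sq_mulVec_bubbleSheet_dotProduct_normal hA,
      sum_sq_entries_of_transpose_eq_neg hA, h10, h32]
    ring
  refine ⟨hform.ge, fun hvanish => Matrix.eq_zero_of_sum_sq_entries_eq_zero ?_⟩
  have hzero : 4 * π ^ 2 * ∑ i, ∑ j, A i j ^ 2 = 0 := by simp [← hform, hvanish]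
  simpa [pi_ne_zero] using hzero
end
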